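/- Let Ω ⊆ ℝ² be a bounded open set containing the segment C = [-1,1] × {0} (so C ⊆ Ω, hence C is contained in the interior of Ω since Ω is open). Then the one-dimensional Hausdorff measure of the frontier of Ω is strictly greater than 4: H¹(frontier Ω) > 4. -/

import Mathlib

/-!
The open set `Ω` contains a slightly longer segment `[-a, a] × {0}` with `a > 1`. Being bounded,
`Ω` is left by every vertical line through that segment both upwards and downwards, so `∂Ω`
meets every such line in the upper and in the lower half-plane. The projection `(x, y) ↦ x` is
1-Lipschitz, so each of these two disjoint parts of `∂Ω` has `H¹`-measure at least `2a > 2`.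
-/
open Set MeasureTheory
open scoped ENNReal

/-- The segment `C = [-1,1] × {0}` in the Euclidean plane. -/
def segC : Set (EuclideanSpace ℝ (Fin 2)) :=
  {p | p 0 ∈ Set.Icc (-1 : ℝ) 1 ∧ p 1 = 0}

theorem IsPreconnected.inter_frontier_nonempty {X : Type*} [TopologicalSpace X] {s t : Set X}
    (hs : IsPreconnected s) (hst : (s ∩ t).Nonempty) (hst' : (s \ t).Nonempty) :
    (s ∩ frontier t).Nonempty := by
  by_contra h
  have hcover : s ⊆ interior t ∪ (closure t)ᶜ := fun x hx => by
    by_cases hx' : x ∈ closure t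
    · exact Or.inl (by_contra fun hi => h ⟨x, hx, hx', hi⟩)
    · exact Or.inr hx'
  obtain ⟨x, hxs, hxt⟩ := hst
  have hsub : s ⊆ interior t :=
    hs.subset_left_of_subset_union isOpen_interior isClosed_closure.isOpen_compl
      (disjoint_compl_right.mono_right (compl_subset_compl.2 interior_subset_closure)) hcover
      ⟨x, hxs, (hcover hxs).resolve_right (not_not.2 (subset_closure hxt))⟩
  obtain ⟨y, hys, hyt⟩ := hst'
  exact hyt (interior_subset (hsub hys))

theorem IsOpen.exists_mem_Ioc_mem_frontier {X : Type*} [TopologicalSpace X] {U : Set X}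
    (hU : IsOpen U) {γ : ℝ → X} (hγ : Continuous γ) (h₀ : γ 0 ∈ U) {T : ℝ}
    (hT₀ : 0 ≤ T) (hT : γ T ∉ U) : ∃ t ∈ Ioc 0 T, γ t ∈ frontier U := by
  obtain ⟨_, ⟨t, ht, rfl⟩, hfr⟩ :=
    (isPreconnected_Icc.image γ hγ.continuousOn).inter_frontier_nonempty
    ⟨γ 0, mem_image_of_mem γ (left_mem_Icc.2 hT₀), h₀⟩
    ⟨γ T, mem_image_of_mem γ (right_mem_Icc.2 hT₀), hT⟩
  refine ⟨t, ⟨ht.1.lt_of_ne ?_, ht.2⟩, hfr⟩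
  rintro rfl
  exact hU.inter_frontier_eq.subset ⟨h₀, hfr⟩

theorem IsOpen.exists_Icc_sub_add_subset {U : Set ℝ} (hU : IsOpen U) {a b : ℝ} (hab : a ≤ b)
    (h : Icc a b ⊆ U) : ∃ ε > 0, Icc (a - ε) (b + ε) ⊆ U := by
  obtain ⟨l, hl, hlU⟩ := exists_Ioc_subset_of_mem_nhds (hU.mem_nhds (h ⟨le_rfl, hab⟩))
    ⟨a - 1, by linarith⟩
  obtain ⟨u, hu, huU⟩ := exists_Ico_subset_of_mem_nhds (hU.mem_nhds (h ⟨hab, le_rfl⟩))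
    ⟨b + 1, by linarith⟩
  refine ⟨min (a - l) (u - b) / 2, by positivity, fun x hx => ?_⟩
  have := min_le_left (a - l) (u - b)
  have := min_le_right (a - l) (u - b)
  rcases lt_or_ge x a with hxa | hax
  · exact hlU ⟨by linarith [hx.1], hxa.le⟩
  rcases le_or_gt x b with hxb | hbx
  · exact h ⟨hax, hxb⟩
  · exact huU ⟨hbx.le, by linarith [hx.2]⟩

theorem LipschitzWith.volume_le_hausdorffMeasure_of_subset_image {X : Type*} [EMetricSpace X]
    [MeasurableSpace X] [BorelSpace X] {f : X → ℝ} (hf : LipschitzWith 1 f) {s : Set ℝ}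
    {S : Set X} (hs : s ⊆ f '' S) : volume s ≤ μH[1] S :=
  calc volume s ≤ μH[1] (f '' S) := by rw [hausdorffMeasure_real]; exact measure_mono hs
    _ ≤ μH[1] S := by simpa using hf.hausdorffMeasure_image_le zero_le_one S

theorem EuclideanSpace.lipschitzWith_apply {ι : Type*} [Fintype ι] (i : ι) :
    LipschitzWith 1 fun p : EuclideanSpace ℝ ι => p i :=
  LipschitzWith.of_dist_le_mul fun p q => by simpa using PiLp.dist_apply_le p q i

theorem exists_frontier_above_and_below {Ω : Set (EuclideanSpace ℝ (Fin 2))} (hΩo : IsOpen Ω)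
    (hΩb : Bornology.IsBounded Ω) {x : ℝ} (hx : !₂[x, 0] ∈ Ω) :
    (∃ y > 0, !₂[x, y] ∈ frontier Ω) ∧ ∃ y < 0, !₂[x, y] ∈ frontier Ω := by
  obtain ⟨R, hR⟩ := hΩb.subset_closedBall 0
  have hout : ∀ y, |R| < |y| → !₂[x, y] ∉ Ω := fun y hy hmem => by
    have := (PiLp.norm_apply_le !₂[x, y] 1).trans (mem_closedBall_zero_iff.1 (hR hmem))
    simp only [Matrix.cons_val_one, Matrix.cons_val_fin_one, Real.norm_eq_abs] at this
    linarith [le_abs_self R]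
  set T := |R| + 1
  have hT₀ : 0 < T := by positivity
  have hT : |R| < |T| := by rw [abs_of_pos hT₀]; exact lt_add_one _
  constructor
  · obtain ⟨t, ht, hfr⟩ :=
      hΩo.exists_mem_Ioc_mem_frontier (γ := fun t => !₂[x, t]) (T := T) (by fun_prop)
        hx hT₀.le (hout _ hT)
    exact ⟨t, ht.1, hfr⟩
  · obtain ⟨t, ht, hfr⟩ :=
      hΩo.exists_mem_Ioc_mem_frontier (γ := fun t => !₂[x, -t]) (T := T) (by fun_prop)
        (by simpa using hx) hT₀.le (hout _ (by rwa [abs_neg]))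
    exact ⟨-t, neg_neg_iff_pos.2 ht.1, hfr⟩

/-- Any bounded open set `Ω ⊆ ℝ²` containing the segment `C = [-1,1] × {0}` has frontier of
one-dimensional Hausdorff measure strictly greater than `4`. -/
theorem stmt4 (Ω : Set (EuclideanSpace ℝ (Fin 2)))
    (hΩo : IsOpen Ω) (hΩb : Bornology.IsBounded Ω) (hCΩ : segC ⊆ Ω) :
    4 < μH[1] (frontier Ω) := by
  obtain ⟨ε, hε, hsub⟩ :=
    (hΩo.preimage (by fun_prop : Continuous fun x : ℝ => !₂[x, 0])).exists_Icc_sub_add_subset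
      (by norm_num : (-1 : ℝ) ≤ 1) fun x hx => hCΩ ⟨by simpa using hx, by simp⟩
  set I := Icc (-1 - ε) (1 + ε)
  set Fup := frontier Ω ∩ {p | 0 < p 1}
  set Fdown := frontier Ω ∩ {p | p 1 < 0}
  have hπ := EuclideanSpace.lipschitzWith_apply (ι := Fin 2) 0
  have hup : I ⊆ (· 0) '' Fup := fun x hx => by
    obtain ⟨y, hy, hfr⟩ := (exists_frontier_above_and_below hΩo hΩb (hsub hx)).1
    exact ⟨!₂[x, y], ⟨hfr, by simpa using hy⟩, by simp⟩
  have hdown : I ⊆ (· 0) '' Fdown := fun x hx => by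
    obtain ⟨y, hy, hfr⟩ := (exists_frontier_above_and_below hΩo hΩb (hsub hx)).2
    exact ⟨!₂[x, y], ⟨hfr, by simpa using hy⟩, by simp⟩
  have hdisj : Disjoint Fup Fdown := disjoint_left.2 fun p hp hp' => lt_asymm (α := ℝ) hp.2 hp'.2
  have hFdown : MeasurableSet Fdown :=
    measurableSet_frontier.inter (measurableSet_lt (by fun_prop) measurable_const)
  calc 4 < ENNReal.ofReal (2 + 2 * ε) + ENNReal.ofReal (2 + 2 * ε) := by
        rw [← ENNReal.ofReal_add (by positivity) (by positivity),
          show (4 : ℝ≥0∞) = ENNReal.ofReal 4 by norm_num,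
          ENNReal.ofReal_lt_ofReal_iff (by positivity)]
        linarith
    _ = volume I + volume I := by rw [Real.volume_Icc]; ring_nf
    _ ≤ μH[1] Fup + μH[1] Fdown :=
        add_le_add (hπ.volume_le_hausdorffMeasure_of_subset_image hup)
          (hπ.volume_le_hausdorffMeasure_of_subset_image hdown)
    _ = μH[1] (Fup ∪ Fdown) := (measure_union hdisj hFdown).symm
    _ ≤ μH[1] (frontier Ω) := union_subset inter_subset_left inter_subset_left |> measure_mono
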